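/- Let N ∈ ℕ, let w_1, …, w_N > 0 and fix arrival times s_1, …, s_N ∈ ℝ. For a tuple of delays d = (d_1,…,d_N) ∈ [0,∞)^N, let T(d) denote the unique t ∈ ℝ with Σ_{i=1}^N w_i · ρ(t − s_i − d_i) = 1, where ρ(t)=max{t,0}. Then for all delay tuples d, d̃ ∈ [0,∞)^N: |T(d) − T(d̃)| ≤ ‖d − d̃‖_{ℓ∞}. (That is, the spike time of a spiking neuron with positive weights is 1-Lipschitz in the synaptic delays with respect to the ℓ∞ norm.) -/

import Mathlib

open scoped BigOperators

noncomputable section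

/-- The ReLU function. -/
def relu (t : ℝ) : ℝ := max t 0

/-- A network graph: a finite directed acyclic graph without isolated nodes. -/
structure NetworkGraph (V : Type) [Fintype V] [DecidableEq V] where
  E : Finset (V × V)
  acyclic : WellFounded (fun u v : V => (u, v) ∈ E)
  noIsolated : ∀ v : V, (∃ u, (u, v) ∈ E) ∨ (∃ u, (v, u) ∈ E)

variable {V : Type} [Fintype V] [DecidableEq V]

/-- Input nodes: nodes with no incoming edges. -/
def NetworkGraph.Vin (G : NetworkGraph V) : Set V := {v | ∀ u, (u, v) ∉ G.E}

/-- Output nodes: nodes with no outgoing edges. -/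
def NetworkGraph.Vout (G : NetworkGraph V) : Set V := {v | ∀ u, (v, u) ∉ G.E}

/-- There exists a directed path with `n` edges in `G`. -/
def NetworkGraph.HasPathLen (G : NetworkGraph V) (n : ℕ) : Prop :=
  ∃ p : Fin (n + 1) → V, ∀ i : Fin n, (p i.castSucc, p i.succ) ∈ G.E

/-- The graph depth (length of the longest directed path) of `G` equals `L`. -/
def NetworkGraph.DepthEq (G : NetworkGraph V) (L : ℕ) : Prop :=
  G.HasPathLen L ∧ ∀ n : ℕ, G.HasPathLen n → n ≤ L

/-- The potential of node `v` at time `s`, given presynaptic spike times `t`,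
weights `w` and delays `d`. -/
def potential (G : NetworkGraph V) (w d : V × V → ℝ) (t : V → ℝ) (v : V) (s : ℝ) : ℝ :=
  ∑ u ∈ Finset.univ.filter (fun u => (u, v) ∈ G.E), w (u, v) * relu (s - t u - d (u, v))

/-- `t` is a consistent assignment of spike times extending the input spike times `tin`:
on input nodes it agrees with `tin`, and at every non-input node `v` the spike time `t v`
is the minimum (which exists) of the set of times at which the potential reaches `1`. -/
def IsSpikeMap (G : NetworkGraph V) (w d : V × V → ℝ) (tin : V → ℝ) (t : V → ℝ) : Prop :=
  (∀ v ∈ G.Vin, t v = tin v) ∧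
  ∀ v : V, v ∉ G.Vin → IsLeast {s : ℝ | potential G w d t v s = 1} (t v)

open Classical in
/-- The spike-time assignment determined by the input spike times `tin` (via choice). -/
def spikeMap (G : NetworkGraph V) (w d : V × V → ℝ) (tin : V → ℝ) : V → ℝ :=
  if h : ∃ t, IsSpikeMap G w d tin t then h.choose else fun _ => 0

/-- Realization of a (positive) SNN, given enumerations of input and output nodes. -/
def snnReal (G : NetworkGraph V) (w d : V × V → ℝ) {din dout : ℕ}
    (ein : Fin din → V) (eout : Fin dout → V) (x : Fin din → ℝ) : Fin dout → ℝ :=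
  fun j => spikeMap G w d (Function.extend ein x (fun _ => 0)) (eout j)

/-- Frobenius norm of a real matrix. -/
def frobNorm {m n : ℕ} (A : Matrix (Fin m) (Fin n) ℝ) : ℝ :=
  Real.sqrt (∑ i, ∑ j, (A i j) ^ 2)

/-- Realization of an affine SNN: affine encoder, positive SNN, affine decoder. -/
def affineReal (G : NetworkGraph V) (w d : V × V → ℝ) {din dout d0 d1 : ℕ}
    (ein : Fin din → V) (eout : Fin dout → V)
    (Win : Matrix (Fin din) (Fin d0) ℝ) (bin : Fin din → ℝ)
    (Wout : Matrix (Fin d1) (Fin dout) ℝ) (bout : Fin d1 → ℝ)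
    (x : Fin d0 → ℝ) : Fin d1 → ℝ :=
  Wout.mulVec (snnReal G w d ein eout (Win.mulVec x + bin)) + bout

/-- ℓ∞ distance of the parameters (weights and delays) of two SNNs on the same graph. -/
def paramDist (G : NetworkGraph V) (w d w' d' : V × V → ℝ) : ℝ :=
  sSup ((fun e => max |w e - w' e| |d e - d' e|) '' (G.E : Set (V × V)))

/-- An affine spiking neural network with input dimension `d0` and output dimension `d1`:
a positive SNN together with enumerations of its input/output nodes and an affine
encoder/decoder pair. -/
structure AffSNN (d0 d1 : ℕ) where
  n : ℕ
  din : ℕ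
  dout : ℕ
  G : NetworkGraph (Fin n)
  w : Fin n × Fin n → ℝ
  dl : Fin n × Fin n → ℝ
  ein : Fin din → Fin n
  eout : Fin dout → Fin n
  Win : Matrix (Fin din) (Fin d0) ℝ
  bin : Fin din → ℝ
  Wout : Matrix (Fin d1) (Fin dout) ℝ
  bout : Fin d1 → ℝ
  w_pos : ∀ e ∈ G.E, 0 < w e
  dl_nonneg : ∀ e ∈ G.E, 0 ≤ dl e
  ein_inj : Function.Injective ein
  ein_range : Set.range ein = G.Vin
  eout_inj : Function.Injective eout
  eout_range : Set.range eout = G.Vout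

/-- Realization of an affine SNN. -/
def AffSNN.real {d0 d1 : ℕ} (Ψ : AffSNN d0 d1) : (Fin d0 → ℝ) → Fin d1 → ℝ :=
  affineReal Ψ.G Ψ.w Ψ.dl Ψ.ein Ψ.eout Ψ.Win Ψ.bin Ψ.Wout Ψ.bout

/-- Size of an affine SNN: the number of nonzero scalar entries of
`(W, D, W_in, W_out, b_in, b_out)`. -/
def AffSNN.size {d0 d1 : ℕ} (Ψ : AffSNN d0 d1) : ℕ :=
  {e | e ∈ Ψ.G.E ∧ Ψ.w e ≠ 0}.ncard + {e | e ∈ Ψ.G.E ∧ Ψ.dl e ≠ 0}.ncard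
    + {p : Fin Ψ.din × Fin d0 | Ψ.Win p.1 p.2 ≠ 0}.ncard
    + {p : Fin d1 × Fin Ψ.dout | Ψ.Wout p.1 p.2 ≠ 0}.ncard
    + {i : Fin Ψ.din | Ψ.bin i ≠ 0}.ncard + {i : Fin d1 | Ψ.bout i ≠ 0}.ncard

/-- All scalar weights of the affine SNN are bounded above in absolute value by `C`. -/
def AffSNN.weightsBddAbove {d0 d1 : ℕ} (Ψ : AffSNN d0 d1) (C : ℝ) : Prop :=
  (∀ e ∈ Ψ.G.E, |Ψ.w e| ≤ C) ∧ (∀ e ∈ Ψ.G.E, |Ψ.dl e| ≤ C) ∧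
  (∀ i j, |Ψ.Win i j| ≤ C) ∧ (∀ i, |Ψ.bin i| ≤ C) ∧
  (∀ i j, |Ψ.Wout i j| ≤ C) ∧ (∀ i, |Ψ.bout i| ≤ C)

/-- All synaptic weights of the affine SNN are bounded below by `c`. -/
def AffSNN.synBddBelow {d0 d1 : ℕ} (Ψ : AffSNN d0 d1) (c : ℝ) : Prop :=
  ∀ e ∈ Ψ.G.E, c ≤ Ψ.w e

/-- Clipping to the interval `[0,1]`. -/
def clip01 (y : ℝ) : ℝ := max 0 (min 1 y)

/-- The hypothesis class of `[0,1]`-clipped realizations of affine SNNs on a fixed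
network graph with parameters bounded as in `P*_SNN(G, d⃗; b, B)` (with `d1 = 1`). -/
def clippedClass (G : NetworkGraph V) {din dout : ℕ} (ein : Fin din → V) (eout : Fin dout → V)
    (b B : ℝ) (d0 : ℕ) : Set ((Fin d0 → ℝ) → ℝ) :=
  { f | ∃ (Win : Matrix (Fin din) (Fin d0) ℝ) (bin : Fin din → ℝ)
        (w dl : V × V → ℝ) (Wout : Matrix (Fin 1) (Fin dout) ℝ) (bout : Fin 1 → ℝ),
      (∀ i j, Win i j ∈ Set.Icc (-B) B) ∧ (∀ i, bin i ∈ Set.Icc (-B) B) ∧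
      (∀ e ∈ G.E, w e ∈ Set.Icc b B) ∧ (∀ e ∈ G.E, dl e ∈ Set.Icc 0 B) ∧
      (∀ i j, Wout i j ∈ Set.Icc (-B) B) ∧ (∀ i, bout i ∈ Set.Icc (-B) B) ∧
      f = fun x => clip01 (affineReal G w dl ein eout Win bin Wout bout x 0) }

/-- The Lipschitz constant `L*` from the covering-number estimate. -/
def Lstar (d0 din dout L : ℕ) (b B : ℝ) : ℝ :=
  (dout : ℝ) * (2 * Real.sqrt din * d0 * B + B * L * (1 + 1 / b ^ 2)
    + 2 * B + L * (1 / b + B)) + 1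

/-- A regular triangulation of a compact set `Ω ⊆ ℝ^{d0}`, with simplices recorded by
their vertex sets. -/
structure RegTriangulation (d0 : ℕ) (Ω : Set (Fin d0 → ℝ)) where
  nodes : Finset (Fin d0 → ℝ)
  faces : Finset (Finset (Fin d0 → ℝ))
  nodes_sub : (nodes : Set (Fin d0 → ℝ)) ⊆ Ω
  card_face : ∀ S ∈ faces, S.card = d0 + 1
  indep : ∀ S ∈ faces, AffineIndependent ℝ ((↑) : {x // x ∈ S} → (Fin d0 → ℝ))
  face_nodes : ∀ S ∈ faces,
    (nodes : Set (Fin d0 → ℝ)) ∩ convexHull ℝ (S : Set (Fin d0 → ℝ)) = (S : Set (Fin d0 → ℝ))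
  cover : Ω = ⋃ S ∈ faces, convexHull ℝ (S : Set (Fin d0 → ℝ))
  inter : ∀ S ∈ faces, ∀ S' ∈ faces,
    convexHull ℝ (S : Set (Fin d0 → ℝ)) ∩ convexHull ℝ (S' : Set (Fin d0 → ℝ))
      = convexHull ℝ ((S ∩ S' : Finset (Fin d0 → ℝ)) : Set (Fin d0 → ℝ))

/-- Euclidean distance on `ℝ^{d0}` (realized as `Fin d0 → ℝ`). -/
def eudist {d0 : ℕ} (x y : Fin d0 → ℝ) : ℝ := Real.sqrt (∑ i, (x i - y i) ^ 2)

/-- Minimal mesh size: the minimal distance between two distinct nodes of a simplex. -/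
def hmin {d0 : ℕ} {Ω : Set (Fin d0 → ℝ)} (T : RegTriangulation d0 Ω) : ℝ :=
  sInf { r | ∃ S ∈ T.faces, ∃ x ∈ S, ∃ y ∈ S, x ≠ y ∧ r = eudist x y }

/-- Maximal mesh size: the maximal distance between two nodes of a simplex. -/
def hmax {d0 : ℕ} {Ω : Set (Fin d0 → ℝ)} (T : RegTriangulation d0 Ω) : ℝ :=
  sSup { r | ∃ S ∈ T.faces, ∃ x ∈ S, ∃ y ∈ S, r = eudist x y }

/-- `f` belongs to the linear finite element space `V_T`: it is continuous on `Ω` and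
affine on each simplex of `T`. -/
def PiecewiseAffineOn {d0 : ℕ} {Ω : Set (Fin d0 → ℝ)} (T : RegTriangulation d0 Ω)
    (f : (Fin d0 → ℝ) → ℝ) : Prop :=
  ContinuousOn f Ω ∧ ∀ S ∈ T.faces, ∃ (a : Fin d0 → ℝ) (c : ℝ),
    ∀ x ∈ convexHull ℝ (S : Set (Fin d0 → ℝ)), f x = ∑ i, a i * x i + c

/-- Admissibility of a compact domain: existence of quasi-uniform triangulations. -/
def Admissible (d0 : ℕ) (Ω : Set (Fin d0 → ℝ)) : Prop :=
  ∃ C1 C2 c2 : ℝ, 0 < C1 ∧ 0 < C2 ∧ 0 < c2 ∧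
    ∀ N : ℕ, 0 < N → ∃ T : RegTriangulation d0 Ω,
      (T.faces.card : ℝ) ≤ C1 * N ∧
      c2 * (N : ℝ) ^ (-(1 : ℝ) / d0) ≤ hmin T ∧
      hmin T ≤ hmax T ∧
      hmax T ≤ C2 * (N : ℝ) ^ (-(1 : ℝ) / d0)

/-- The `W^{s,∞}(Ω)` norm (for `C^s` functions): supremum over `Ω` of the norms of the
iterated derivatives of order at most `s`. -/
def sobNorm {d0 : ℕ} (s : ℕ) (Ω : Set (Fin d0 → ℝ)) (f : (Fin d0 → ℝ) → ℝ) : ℝ :=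
  sSup { r | ∃ k ≤ s, ∃ x ∈ Ω, r = ‖iteratedFDeriv ℝ k f x‖ }

/-- The `L^∞(Ω)` norm. -/
def supNormOn {d0 : ℕ} (Ω : Set (Fin d0 → ℝ)) (f : (Fin d0 → ℝ) → ℝ) : ℝ :=
  sSup ((fun x => |f x|) '' Ω)

/-- The Barron class `Γ_K`. -/
def BarronClass (d0 : ℕ) (K : ℝ) (f : (Fin d0 → ℝ) → ℝ) : Prop :=
  MeasureTheory.LocallyIntegrable f MeasureTheory.volume ∧
  ∃ g : (Fin d0 → ℝ) → ℂ, Measurable g ∧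
    (∀ x, (f x : ℂ) = ∫ ξ, Complex.exp (Complex.I * ((∑ i, x i * ξ i : ℝ) : ℂ)) * g ξ) ∧
    (∫ ξ, eudist ξ 0 * ‖g ξ‖) ≤ K

end

/-! The spike time is the first time the potential `∑ i, w i * relu (t - c i)` reaches `1`,
where `c i = s i + d i` is the effective arrival time of input `i`. Shifting every arrival
time by at most `δ` changes each term's argument by at most `δ`, so the shifted potential at
`t + δ` dominates the original one at `t`; since the potential is strictly increasing once
positive, the level `1` is reached at most `δ` later, and symmetrically at most `δ` earlier. -/

lemma relu_monotone : Monotone relu := fun _ _ h => max_le_max_right 0 h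

lemma relu_pos {x : ℝ} : 0 < relu x ↔ 0 < x := by
  simp [relu]

lemma relu_of_nonneg {x : ℝ} (hx : 0 ≤ x) : relu x = x := max_eq_left hx

def neuronPotential {ι : Type*} [Fintype ι] (w c : ι → ℝ) (t : ℝ) : ℝ :=
  ∑ i, w i * relu (t - c i)

namespace neuronPotential

variable {ι : Type*} [Fintype ι] {w c : ι → ℝ}

lemma le_shift (hw : ∀ i, 0 ≤ w i) {c' : ι → ℝ} {δ : ℝ} (hc : ∀ i, c' i ≤ c i + δ)
    (t : ℝ) :
    neuronPotential w c t ≤ neuronPotential w c' (t + δ) :=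
  Finset.sum_le_sum fun i _ =>
    mul_le_mul_of_nonneg_left (relu_monotone (by linarith [hc i])) (hw i)

lemma lt_of_pos_of_lt (hw : ∀ i, 0 < w i) {t u : ℝ} (hpos : 0 < neuronPotential w c t)
    (htu : t < u) :
    neuronPotential w c t < neuronPotential w c u := by
  obtain ⟨i, -, hi⟩ : ∃ i ∈ Finset.univ, (0 : ℝ) < w i * relu (t - c i) :=
    Finset.exists_lt_of_sum_lt (by simpa [neuronPotential] using hpos)
  have hti : 0 < t - c i := relu_pos.mp (pos_of_mul_pos_right hi (hw i).le)
  refine Finset.sum_lt_sum (fun j _ => mul_le_mul_of_nonneg_left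
    (relu_monotone (by linarith)) (hw j).le) ⟨i, Finset.mem_univ i, ?_⟩
  rw [relu_of_nonneg hti.le, relu_of_nonneg (by linarith)]
  exact mul_lt_mul_of_pos_left (by linarith) (hw i)

lemma le_of_eq_one_of_one_le (hw : ∀ i, 0 < w i) {t u : ℝ} (ht : neuronPotential w c t = 1)
    (hu : 1 ≤ neuronPotential w c u) : t ≤ u := by
  by_contra! hut
  linarith [lt_of_pos_of_lt hw (by linarith) hut]

lemma abs_sub_le_of_eq_one (hw : ∀ i, 0 < w i) {c' : ι → ℝ} {δ : ℝ}
    (hc : ∀ i, |c i - c' i| ≤ δ) {t t' : ℝ} (ht : neuronPotential w c t = 1)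
    (ht' : neuronPotential w c' t' = 1) : |t - t'| ≤ δ := by
  have hw₀ : ∀ i, 0 ≤ w i := fun i => (hw i).le
  have h₁ : t ≤ t' + δ := le_of_eq_one_of_one_le hw ht <|
    ht' ▸ le_shift hw₀ (fun i => by linarith [(abs_le.mp (hc i)).2]) t'
  have h₂ : t' ≤ t + δ := le_of_eq_one_of_one_le hw ht' <|
    ht ▸ le_shift hw₀ (fun i => by linarith [(abs_le.mp (hc i)).1]) t
  exact abs_sub_le_iff.mpr ⟨by linarith, by linarith⟩

end neuronPotential

theorem statement15_general (N : ℕ) (w : Fin N → ℝ) (hw : ∀ i, 0 < w i)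
    (s : Fin N → ℝ) (d d' : Fin N → ℝ)
    (t t' : ℝ)
    (ht : ∑ i, w i * relu (t - s i - d i) = 1)
    (ht' : ∑ i, w i * relu (t' - s i - d' i) = 1) :
    |t - t'| ≤ ‖d - d'‖ := by
  have hpot : ∀ (e : Fin N → ℝ) (u : ℝ),
      neuronPotential w (s + e) u = ∑ i, w i * relu (u - s i - e i) := by
    intro e u
    simp only [neuronPotential, Pi.add_apply, sub_sub]
  have hdelay : ∀ i, |(s + d) i - (s + d') i| ≤ ‖d - d'‖ := fun i => by
    simpa [Real.norm_eq_abs] using norm_le_pi_norm (d - d') i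
  exact neuronPotential.abs_sub_le_of_eq_one hw hdelay (by rw [hpot, ht]) (by rw [hpot, ht'])

/-- Lemma: the spike time of a positive-weight neuron is 1-Lipschitz
in the synaptic delays, w.r.t. the ℓ∞ norm. If `t` and `t'` are the (unique)
solutions of `Σ w_i ρ(t − s_i − d_i) = 1` for delay tuples `d` and `d'`, then
`|t − t'| ≤ ‖d − d'‖_∞`. -/
theorem statement15 (N : ℕ) (w : Fin N → ℝ) (hw : ∀ i, 0 < w i)
    (s : Fin N → ℝ) (d d' : Fin N → ℝ)
    (hd : ∀ i, 0 ≤ d i) (hd' : ∀ i, 0 ≤ d' i)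
    (t t' : ℝ)
    (ht : ∑ i, w i * relu (t - s i - d i) = 1)
    (ht' : ∑ i, w i * relu (t' - s i - d' i) = 1) :
    |t - t'| ≤ ‖d - d'‖ :=
  statement15_general N w hw s d d' t t' ht ht'
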